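/- arXiv:1602.05985 — 3 statements merged into one kernel-verified Lean document; each statement's English description precedes it below -/
import Mathlib

section
/- For every element R of the even subalgebra Cl⁰(3) there exists a real number c ≥ 0 such that R·reverse(R) = c·1, and c = 0 if and only if R = 0. (Thus R ↦ R·reverse(R) endows the 4-dimensional space Cl⁰(3) with a positive definite Euclidean norm.) -/
/-!
The bivectors `e₀e₁`, `e₁e₂`, `e₀e₂` satisfy Hamilton's relations `i² = j² = -1`, `ij = -ji = k`,
so they define an algebra map `ℍ → Cl(3)`. Its image contains every product of two vectors, hence
all of `Cl⁰(3)`. Reversal negates bivectors, so on this image it is quaternion conjugation, and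
`R · reverse R` is the image of `q · q̄ = |q|²`.
-/

noncomputable section

/-- The positive definite quadratic form `Q(v) = v₁² + v₂² + v₃²` on `ℝ³`. -/
def Q3 : QuadraticForm ℝ (Fin 3 → ℝ) :=
  QuadraticMap.weightedSumSquares ℝ (fun _ : Fin 3 => (1 : ℝ))

namespace CliffordAlgebra

variable {R : Type*} [CommRing R]

theorem reverse_ι_mul_ι_of_isOrtho {M : Type*} [AddCommGroup M] [Module R M]
    {Q : QuadraticForm R M} {a b : M} (h : Q.IsOrtho a b) :
    reverse (ι Q a * ι Q b) = -(ι Q a * ι Q b) := by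
  rw [reverse.map_mul, reverse_ι, reverse_ι, ι_mul_ι_comm_of_isOrtho h.symm]

theorem ι_eq_sum_smul_ι_single {n : Type*} [Fintype n] [DecidableEq n]
    {Q : QuadraticForm R (n → R)} (m : n → R) :
    ι Q m = ∑ i, m i • ι Q (Pi.single i 1) := by
  simp only [← map_smul, ← map_sum, ← Pi.single_smul', smul_eq_mul, mul_one,
    Finset.univ_sum_single]

end CliffordAlgebra

namespace Cl3

open CliffordAlgebra Quaternion

def e (i : Fin 3) : CliffordAlgebra Q3 := ι Q3 (Pi.single i 1)

lemma Q3_single (i : Fin 3) : Q3 (Pi.single i 1) = 1 := by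
  simp [Q3, QuadraticMap.weightedSumSquares_apply, Pi.single_apply]

lemma isOrtho_single {i j : Fin 3} (h : i ≠ j) : Q3.IsOrtho (Pi.single i 1) (Pi.single j 1) := by
  fin_cases i <;> fin_cases j <;>
    simp_all [QuadraticMap.IsOrtho, Q3, QuadraticMap.weightedSumSquares_apply, Fin.sum_univ_three]

@[simp]
lemma e_mul_self (i : Fin 3) : e i * e i = 1 := by
  rw [e, ι_sq_scalar, Q3_single, map_one]

@[simp]
lemma e_mul_e_mul_self (i : Fin 3) (x : CliffordAlgebra Q3) : e i * (e i * x) = x := by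
  rw [← mul_assoc, e_mul_self, one_mul]

lemma e_mul_e_comm {i j : Fin 3} (h : i ≠ j) : e i * e j = -(e j * e i) :=
  ι_mul_ι_comm_of_isOrtho (isOrtho_single h)

lemma e_mul_e_mul_comm {i j : Fin 3} (h : i ≠ j) (x : CliffordAlgebra Q3) :
    e i * (e j * x) = -(e j * (e i * x)) :=
  ι_mul_ι_mul_of_isOrtho x (isOrtho_single h)

lemma reverse_e_mul_e {i j : Fin 3} (h : i ≠ j) : reverse (e i * e j) = -(e i * e j) :=
  reverse_ι_mul_ι_of_isOrtho (isOrtho_single h)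

def bivectorBasis : QuaternionAlgebra.Basis (CliffordAlgebra Q3) (-1 : ℝ) 0 (-1) where
  i := e 0 * e 1
  j := e 1 * e 2
  k := e 0 * e 2
  i_mul_i := by simp [mul_assoc, e_mul_e_mul_comm (by decide : (1 : Fin 3) ≠ 0)]
  j_mul_j := by simp [mul_assoc, e_mul_e_mul_comm (by decide : (2 : Fin 3) ≠ 1)]
  i_mul_j := by simp [mul_assoc]
  j_mul_i := by
    simp [mul_assoc, e_mul_e_mul_comm (by decide : (2 : Fin 3) ≠ 0),
      e_mul_e_mul_comm (by decide : (1 : Fin 3) ≠ 0), e_mul_e_comm (by decide : (2 : Fin 3) ≠ 1)]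

def ofQuaternion : ℍ[ℝ] →ₐ[ℝ] CliffordAlgebra Q3 := bivectorBasis.liftHom

lemma ofQuaternion_apply (q : ℍ[ℝ]) : ofQuaternion q =
    algebraMap ℝ _ q.re + q.imI • (e 0 * e 1) + q.imJ • (e 1 * e 2) + q.imK • (e 0 * e 2) :=
  rfl

lemma range_ofQuaternion :
    ofQuaternion.range = Algebra.adjoin ℝ {e 0 * e 1, e 1 * e 2, e 0 * e 2} :=
  bivectorBasis.range_liftHom

lemma reverse_ofQuaternion (q : ℍ[ℝ]) : reverse (ofQuaternion q) = ofQuaternion (star q) := by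
  simp only [ofQuaternion_apply, map_add, map_smul, reverse.commutes,
    reverse_e_mul_e (by decide : (0 : Fin 3) ≠ 1), reverse_e_mul_e (by decide : (1 : Fin 3) ≠ 2),
    reverse_e_mul_e (by decide : (0 : Fin 3) ≠ 2)]
  simp

lemma ofQuaternion_mul_reverse (q : ℍ[ℝ]) :
    ofQuaternion q * reverse (ofQuaternion q) = algebraMap ℝ _ (normSq q) := by
  rw [reverse_ofQuaternion, ← map_mul, self_mul_star, ← Quaternion.algebraMap_def, AlgHom.commutes]

lemma e_mul_e_mem_range (i j : Fin 3) : e i * e j ∈ ofQuaternion.range := by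
  rw [range_ofQuaternion]
  have h01 : e 0 * e 1 ∈ Algebra.adjoin ℝ {e 0 * e 1, e 1 * e 2, e 0 * e 2} :=
    Algebra.subset_adjoin (by simp)
  have h12 : e 1 * e 2 ∈ Algebra.adjoin ℝ {e 0 * e 1, e 1 * e 2, e 0 * e 2} :=
    Algebra.subset_adjoin (by simp)
  have h02 : e 0 * e 2 ∈ Algebra.adjoin ℝ {e 0 * e 1, e 1 * e 2, e 0 * e 2} :=
    Algebra.subset_adjoin (by simp)
  fin_cases i <;> fin_cases j <;>
    simp [h01, h12, h02, e_mul_e_comm (by decide : (1 : Fin 3) ≠ 0),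
      e_mul_e_comm (by decide : (2 : Fin 3) ≠ 1), e_mul_e_comm (by decide : (2 : Fin 3) ≠ 0)]

lemma ι_mul_ι_mem_range (m₁ m₂ : Fin 3 → ℝ) : ι Q3 m₁ * ι Q3 m₂ ∈ ofQuaternion.range := by
  rw [ι_eq_sum_smul_ι_single m₁, ι_eq_sum_smul_ι_single m₂, Finset.sum_mul_sum]
  exact Subalgebra.sum_mem _ fun i _ => Subalgebra.sum_mem _ fun j _ =>
    smul_mul_smul_comm (m₁ i) (e i) (m₂ j) (e j) ▸ Subalgebra.smul_mem _ (e_mul_e_mem_range i j) _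

lemma even_le_range_ofQuaternion : even Q3 ≤ ofQuaternion.range := by
  intro x hx
  induction x, hx using even_induction with
  | algebraMap r => exact Subalgebra.algebraMap_mem _ r
  | add x y _ _ hx hy => exact add_mem hx hy
  | ι_mul_ι_mul m₁ m₂ x _ hx => exact mul_mem (ι_mul_ι_mem_range m₁ m₂) hx

end Cl3

open Cl3 Quaternion in
/-- For every element `R` of the even subalgebra `Cl⁰(3)` there is a real `c ≥ 0` with
`R · reverse R = c · 1`, and `c = 0` iff `R = 0`:
`R ↦ R · reverse R` is a positive definite Euclidean norm on `Cl⁰(3)`. -/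
theorem even_mul_reverse_self_nonneg_scalar (R : CliffordAlgebra.even Q3) :
    ∃ c : ℝ, 0 ≤ c ∧
      (R : CliffordAlgebra Q3) * CliffordAlgebra.reverse (R : CliffordAlgebra Q3) =
        algebraMap ℝ (CliffordAlgebra Q3) c ∧
      (c = 0 ↔ R = 0) := by
  obtain ⟨q, hq⟩ := (AlgHom.mem_range _).mp (even_le_range_ofQuaternion R.2)
  have hprod := ofQuaternion_mul_reverse q
  rw [hq] at hprod
  refine ⟨normSq q, normSq_nonneg, hprod, normSq_eq_zero.trans ⟨?_, ?_⟩⟩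
  · rintro rfl
    exact Subtype.ext (by rw [← hq, map_zero, ZeroMemClass.coe_zero])
  · rintro rfl
    rw [ZeroMemClass.coe_zero, zero_mul, eq_comm, map_eq_zero_iff _ (algebraMap ℝ _).injective,
      normSq_eq_zero] at hprod
    exact hprod
end
end

section
/- The binary icosahedral group G has exactly 9 conjugacy classes. -/
noncomputable section

open Quaternion

/-- The golden ratio `τ = (1+√5)/2`. -/
def τ : ℝ := (1 + Real.sqrt 5) / 2

/-- The simple root `a₁ = j` of `H₃`, as a pure unit quaternion. -/
def a₁ : ℍ[ℝ] := ⟨0, 0, 1, 0⟩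

/-- The simple root `a₂ = -½((τ-1)i + j + τk)` of `H₃`, as a pure unit quaternion. -/
def a₂ : ℍ[ℝ] := ⟨0, -((τ - 1) / 2), -(1 / 2), -(τ / 2)⟩

/-- The simple root `a₃ = k` of `H₃`, as a pure unit quaternion. -/
def a₃ : ℍ[ℝ] := ⟨0, 0, 0, 1⟩

/-- The subgroup of `ℍˣ` generated by the two spinors `a₁a₂` and `a₂a₃`
(the binary icosahedral group `2I`). -/
def G2I : Subgroup (ℍ[ℝ])ˣ :=
  Subgroup.closure {u : (ℍ[ℝ])ˣ | (u : ℍ[ℝ]) = a₁ * a₂ ∨ (u : ℍ[ℝ]) = a₂ * a₃}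

/-!
The spinors `s₁ = a₁a₂` and `s₂ = a₂a₃` have coordinates in `ℚ(τ)`, so `G` is isomorphic to the
subgroup of `ℍ[ℚ(τ)]ˣ` they generate, where equality is decidable. Conjugation preserves the real
part, and `1, s₁, s₁², s₁³ = -1, s₂, s₂², s₂³, s₂⁴, s₁s₂ = -i` have the nine distinct real parts
`1, 1/2, -1/2, -1, τ/2, (τ-1)/2, -(τ-1)/2, -τ/2, 0`. Closing these nine elements under conjugation
by `s₁` and `s₂` yields a finite set containing `1` and stable under left multiplication by `s₁`
and `s₂`; it is therefore all of `G`, and every element of `G` is conjugate to one of the nine.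
-/

namespace Quaternion

variable {R S : Type*} [CommRing R] [CommRing S]

instance [DecidableEq R] : DecidableEq ℍ[R] :=
  fun _ _ => decidable_of_iff _ Quaternion.ext_iff.symm

@[simps]
def map (f : R →+* S) (x : ℍ[R]) : ℍ[S] := ⟨f x.re, f x.imI, f x.imJ, f x.imK⟩

def mapRingHom (f : R →+* S) : ℍ[R] →+* ℍ[S] where
  toFun := map f
  map_one' := by ext <;> simp
  map_mul' x y := by ext <;> simp [re_mul, imI_mul, imJ_mul, imK_mul]
  map_zero' := by ext <;> simp
  map_add' x y := by ext <;> simp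

theorem mapRingHom_injective {f : R →+* S} (hf : Function.Injective f) :
    Function.Injective (mapRingHom f) := fun x y h => by
  ext <;> apply hf
  exacts [congrArg QuaternionAlgebra.re h, congrArg QuaternionAlgebra.imI h,
    congrArg QuaternionAlgebra.imJ h, congrArg QuaternionAlgebra.imK h]

theorem re_mul_comm (x y : ℍ[R]) : (x * y).re = (y * x).re := by
  simp only [re_mul]
  ring

theorem re_units_conj (c x : ℍ[R]ˣ) : ((c * x * c⁻¹ : ℍ[R]ˣ) : ℍ[R]).re = (x : ℍ[R]).re := by
  rw [Units.val_mul, Units.val_mul, re_mul_comm, ← mul_assoc, Units.inv_mul, one_mul]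

def unitOfMulStarEqOne (q : ℍ[R]) (h : q * star q = 1) : ℍ[R]ˣ :=
  ⟨q, star q, h, by rw [star_comm_self', h]⟩

end Quaternion

theorem MulEquiv.natCard_conjClasses_eq {G H : Type*} [Group G] [Group H] (e : G ≃* H) :
    Nat.card (ConjClasses G) = Nat.card (ConjClasses H) :=
  Nat.card_congr
    { toFun := ConjClasses.map e.toMonoidHom
      invFun := ConjClasses.map e.symm.toMonoidHom
      left_inv := fun x => by
        obtain ⟨g, rfl⟩ := ConjClasses.mk_surjective x
        exact congrArg ConjClasses.mk (e.symm_apply_apply g)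
      right_inv := fun x => by
        obtain ⟨g, rfl⟩ := ConjClasses.mk_surjective x
        exact congrArg ConjClasses.mk (e.apply_symm_apply g) }

theorem natCard_conjClasses_eq_of_classFunction {G β : Type*} [Group G] {n : ℕ}
    (rep : Fin n → G) (f : G → β) (hf : ∀ c x, f (c * x * c⁻¹) = f x)
    (hrep : Function.Injective (f ∘ rep)) (hcover : ∀ x, ∃ i, IsConj (rep i) x) :
    Nat.card (ConjClasses G) = n := by
  have hbij : Function.Bijective (ConjClasses.mk ∘ rep) := by
    refine ⟨fun i j hij => hrep ?_, fun x => ?_⟩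
    · obtain ⟨c, hc⟩ := isConj_iff.1 (ConjClasses.mk_eq_mk_iff_isConj.1 hij)
      simp only [Function.comp_apply, ← hc, hf]
    · obtain ⟨x, rfl⟩ := ConjClasses.mk_surjective x
      obtain ⟨i, hi⟩ := hcover x
      exact ⟨i, ConjClasses.mk_eq_mk_iff_isConj.2 hi⟩
  rw [← Nat.card_eq_of_bijective _ hbij, Nat.card_fin]

theorem Subgroup.closure_subset_of_finite_of_mul_mem {G : Type*} [Group G] {s E : Set G} (hE : E.Finite)
    (h1 : 1 ∈ E) (hmul : ∀ g ∈ s, ∀ x ∈ E, g * x ∈ E) : (closure s : Set G) ⊆ E := by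
  have hinv : ∀ g ∈ s, ∀ x ∈ E, g⁻¹ * x ∈ E := by
    intro g hg x hx
    obtain ⟨y, hy, rfl⟩ := ((hE.injOn_iff_bijOn_of_mapsTo (hmul g hg)).1
      (mul_right_injective g).injOn).surjOn hx
    rwa [inv_mul_cancel_left]
  intro x hx
  induction hx using closure_induction_left with
  | one => exact h1
  | mul_left g hg y _ hy => exact hmul g hg y hy
  | inv_mul_cancel g hg y _ hy => exact hinv g hg y hy

section Saturate

variable {α : Type*} [DecidableEq α] (f : α → List α)

def saturate : ℕ → List α → List α → List α
  | 0, seen, _ | _ + 1, seen, [] => seen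
  | n + 1, seen, x :: todo =>
    let new := ((f x).filter (· ∉ seen)).dedup
    saturate n (seen ++ new) (todo ++ new)

theorem subset_saturate (n : ℕ) (seen todo : List α) : seen ⊆ saturate f n seen todo := by
  induction n generalizing seen todo with
  | zero => exact List.Subset.refl _
  | succ n ih =>
    cases todo with
    | nil => exact List.Subset.refl _
    | cons x todo => exact List.Subset.trans (List.subset_append_left _ _) (ih _ _)

theorem saturate_induction {P : α → Prop} (hf : ∀ x, P x → ∀ y ∈ f x, P y) (n : ℕ)
    (seen todo : List α) (hseen : ∀ x ∈ seen, P x) (htodo : ∀ x ∈ todo, P x) :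
    ∀ x ∈ saturate f n seen todo, P x := by
  induction n generalizing seen todo with
  | zero => exact hseen
  | succ n ih =>
    cases todo with
    | nil => exact hseen
    | cons x todo =>
      have hnew : ∀ y ∈ ((f x).filter (· ∉ seen)).dedup, P y := fun y hy =>
        hf x (htodo x List.mem_cons_self) y (List.mem_of_mem_filter (List.mem_dedup.1 hy))
      refine ih _ _ ?_ ?_ <;> simp only [List.mem_append] <;> rintro y (hy | hy)
      exacts [hseen y hy, hnew y hy, htodo y (List.mem_cons_of_mem x hy), hnew y hy]

end Saturate

/-- `ℚ(τ)`, with `ω` (where `ω * ω = 1 + ω`) playing the role of `τ`. -/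
abbrev GoldenField := QuadraticAlgebra ℚ 1 1

def goldenEmbedding : GoldenField →+* ℝ :=
  (QuadraticAlgebra.lift ⟨τ, by rw [one_smul, one_smul, ← sq, add_comm]; exact Real.goldenRatio_sq⟩ :
    GoldenField →ₐ[ℚ] ℝ).toRingHom

theorem goldenEmbedding_apply (z : GoldenField) : goldenEmbedding z = z.re + z.im * τ := by
  simp [goldenEmbedding, Rat.smul_def]

theorem goldenEmbedding_injective : Function.Injective goldenEmbedding := by
  refine (injective_iff_map_eq_zero _).2 fun z hz => ?_
  rw [goldenEmbedding_apply] at hz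
  have him : z.im = 0 := by
    by_contra him
    exact ((Real.goldenRatio_irrational.mul_ratCast him).ratCast_add z.re).ne_zero
      (by rwa [mul_comm] at hz)
  simp only [him, Rat.cast_zero, zero_mul, add_zero, Rat.cast_eq_zero] at hz
  exact QuadraticAlgebra.ext hz him

def s₁ : ℍ[GoldenField]ˣ :=
  unitOfMulStarEqOne ⟨⟨1/2, 0⟩, ⟨0, -1/2⟩, 0, ⟨-1/2, 1/2⟩⟩ (by decide +kernel)

def s₂ : ℍ[GoldenField]ˣ :=
  unitOfMulStarEqOne ⟨⟨0, 1/2⟩, ⟨-1/2, 0⟩, ⟨-1/2, 1/2⟩, 0⟩ (by decide +kernel)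

def icosianEmbedding : ℍ[GoldenField]ˣ →* ℍ[ℝ]ˣ :=
  Units.map (mapRingHom goldenEmbedding : ℍ[GoldenField] →* ℍ[ℝ])

theorem coe_icosianEmbedding (u : ℍ[GoldenField]ˣ) :
    (icosianEmbedding u : ℍ[ℝ]) = map goldenEmbedding u :=
  rfl

theorem icosianEmbedding_injective : Function.Injective icosianEmbedding :=
  Units.map_injective (mapRingHom_injective goldenEmbedding_injective)

theorem icosianEmbedding_s₁ : (icosianEmbedding s₁ : ℍ[ℝ]) = a₁ * a₂ := by
  ext <;> simp only [coe_icosianEmbedding, re_map, imI_map, imJ_map, imK_map, re_mul, imI_mul,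
    imJ_mul, imK_mul, goldenEmbedding_apply] <;> simp [s₁, unitOfMulStarEqOne, a₁, a₂] <;> ring

theorem icosianEmbedding_s₂ : (icosianEmbedding s₂ : ℍ[ℝ]) = a₂ * a₃ := by
  ext <;> simp only [coe_icosianEmbedding, re_map, imI_map, imJ_map, imK_map, re_mul, imI_mul,
    imJ_mul, imK_mul, goldenEmbedding_apply] <;> simp [s₂, unitOfMulStarEqOne, a₂, a₃] <;> ring

def binaryIcosahedral : Subgroup ℍ[GoldenField]ˣ := Subgroup.closure {s₁, s₂}

theorem s₁_mem : s₁ ∈ binaryIcosahedral := Subgroup.subset_closure (Set.mem_insert _ _)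

theorem s₂_mem : s₂ ∈ binaryIcosahedral := Subgroup.subset_closure (Set.mem_insert_of_mem _ rfl)

theorem G2I_eq_map_binaryIcosahedral : G2I = binaryIcosahedral.map icosianEmbedding := by
  rw [binaryIcosahedral, MonoidHom.map_closure, Set.image_pair, G2I]
  congr 1
  ext u
  simp [Units.ext_iff, icosianEmbedding_s₁, icosianEmbedding_s₂]

def classRep : Fin 9 → ℍ[GoldenField]ˣ :=
  ![1, s₁, s₁ ^ 2, s₁ ^ 3, s₂, s₂ ^ 2, s₂ ^ 3, s₂ ^ 4, s₁ * s₂]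

theorem classRep_mem (i : Fin 9) : classRep i ∈ binaryIcosahedral := by
  fin_cases i <;> simp [classRep, s₁_mem, s₂_mem, pow_mem, mul_mem]

theorem re_classRep_injective : Function.Injective fun i => (classRep i : ℍ[GoldenField]).re := by
  decide +kernel

-- The fuel `120` only bounds the number of steps; `conjOrbits_mul_mem` certifies the result.
def conjOrbits : List ℍ[GoldenField]ˣ :=
  saturate (fun x => [s₁ * x * s₁⁻¹, s₂ * x * s₂⁻¹]) 120 (List.ofFn classRep) (List.ofFn classRep)

theorem conjOrbits_mul_mem : ∀ x ∈ conjOrbits, s₁ * x ∈ conjOrbits ∧ s₂ * x ∈ conjOrbits := by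
  decide +kernel

theorem exists_conj_classRep_of_mem_conjOrbits :
    ∀ x ∈ conjOrbits, ∃ c ∈ binaryIcosahedral, ∃ i, c * classRep i * c⁻¹ = x := by
  have hrep : ∀ x ∈ List.ofFn classRep, ∃ c ∈ binaryIcosahedral, ∃ i, c * classRep i * c⁻¹ = x := by
    simp only [List.mem_ofFn, forall_exists_index]
    rintro _ i rfl
    exact ⟨1, one_mem _, i, by group⟩
  refine saturate_induction _ ?_ _ _ _ hrep hrep
  rintro x ⟨c, hc, i, rfl⟩ y hy
  simp only [List.mem_cons, List.not_mem_nil, or_false] at hy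
  rcases hy with rfl | rfl
  · exact ⟨s₁ * c, mul_mem s₁_mem hc, i, by group⟩
  · exact ⟨s₂ * c, mul_mem s₂_mem hc, i, by group⟩

theorem binaryIcosahedral_subset_conjOrbits :
    (binaryIcosahedral : Set ℍ[GoldenField]ˣ) ⊆ {x | x ∈ conjOrbits} := by
  refine Subgroup.closure_subset_of_finite_of_mul_mem (List.finite_toSet _)
    (subset_saturate _ _ _ _ (List.mem_ofFn.2 ⟨0, rfl⟩)) ?_
  rintro g (rfl | rfl) x hx
  exacts [(conjOrbits_mul_mem x hx).1, (conjOrbits_mul_mem x hx).2]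

theorem natCard_conjClasses_binaryIcosahedral : Nat.card (ConjClasses binaryIcosahedral) = 9 := by
  refine natCard_conjClasses_eq_of_classFunction (fun i => ⟨classRep i, classRep_mem i⟩)
    (fun x => (x : ℍ[GoldenField]ˣ).val.re) (fun c x => re_units_conj _ _) re_classRep_injective
    fun x => ?_
  obtain ⟨c, hc, i, hx⟩ :=
    exists_conj_classRep_of_mem_conjOrbits x (binaryIcosahedral_subset_conjOrbits x.2)
  exact ⟨i, isConj_iff.2 ⟨⟨c, hc⟩, Subtype.ext hx⟩⟩

/-- The binary icosahedral group `2I` has exactly 9 conjugacy classes. -/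
theorem binary_icosahedral_conjClasses : Nat.card (ConjClasses G2I) = 9 := by
  rw [((MulEquiv.subgroupCongr G2I_eq_map_binaryIcosahedral).trans (binaryIcosahedral.equivMapOfInjective _
    icosianEmbedding_injective).symm).natCard_conjClasses_eq]
  exact natCard_conjClasses_binaryIcosahedral
end
end

section
/- The following exact inner-product values hold: ⟪α₃,α₄⟫ = −τ/2 (so its reduced value is 0, i.e. α₃ and α₄ become orthogonal); ⟪τα₃, τα₄⟫ = −(2τ+1)/2 (so its reduced value is −1/2, a simple link); and ⟪τα₃, α₄⟫ = ⟪α₃, τα₄⟫ = −(τ+1)/2 (so the reduced values are −1/2, simple links between the two copies of H₄). -/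
noncomputable section

open RealInnerProductSpace

/-- The Galois conjugate `σ = (1-√5)/2 = 1 - τ` of the golden ratio. -/
def σ : ℝ := (1 - Real.sqrt 5) / 2

/-- The simple root `α₃ = ½(0,1,-σ,-τ)` of `H₄` in Euclidean `ℝ⁴`. -/
def α₃ : EuclideanSpace ℝ (Fin 4) := WithLp.toLp 2 ![0, 1 / 2, -σ / 2, -τ / 2]

/-- The simple root `α₄ = ½(0,-1,-σ,τ)` of `H₄` in Euclidean `ℝ⁴`. -/
def α₄ : EuclideanSpace ℝ (Fin 4) := WithLp.toLp 2 ![0, -1 / 2, -σ / 2, τ / 2]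

/-! In coordinates `⟪α₃, α₄⟫ = (σ² - τ² - 1) / 4`, which equals `-τ / 2` already as a polynomial
identity once `σ = 1 - τ` is substituted. The scaled values then follow by bilinearity from
`τ² = τ + 1` and `τ³ = 2τ + 1`. -/

lemma τ_sq : τ ^ 2 = τ + 1 := Real.goldenRatio_sq

lemma τ_pow_three : τ ^ 3 = 2 * τ + 1 := by
  linear_combination (τ + 1) * τ_sq

lemma σ_eq_one_sub_τ : σ = 1 - τ := Real.one_sub_goldenConj.symm

lemma inner_α₃_α₄ : ⟪α₃, α₄⟫ = -τ / 2 := by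
  simp only [α₃, α₄, PiLp.inner_apply, Fin.sum_univ_four, RCLike.inner_apply, conj_trivial,
    Matrix.cons_val_zero, Matrix.cons_val_one, Matrix.cons_val_two, Matrix.cons_val_three,
    Matrix.head_cons, Matrix.tail_cons, σ_eq_one_sub_τ]
  ring

/-- The exact inner-product values: `⟪α₃,α₄⟫ = −τ/2` (reduced value `0`: orthogonal),
`⟪τα₃,τα₄⟫ = −(2τ+1)/2` (reduced value `−1/2`: a simple link), and
`⟪τα₃,α₄⟫ = ⟪α₃,τα₄⟫ = −(τ+1)/2` (reduced values `−1/2`: simple links between the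
two copies of `H₄`). -/
theorem exact_inner_product_values :
    ⟪α₃, α₄⟫ = -τ / 2 ∧
    ⟪τ • α₃, τ • α₄⟫ = -(2 * τ + 1) / 2 ∧
    ⟪τ • α₃, α₄⟫ = -(τ + 1) / 2 ∧
    ⟪α₃, τ • α₄⟫ = -(τ + 1) / 2 := by
  refine ⟨inner_α₃_α₄, ?_, ?_, ?_⟩
  · rw [real_inner_smul_left, real_inner_smul_right, inner_α₃_α₄]
    linear_combination (-1 / 2) * τ_pow_three
  · rw [real_inner_smul_left, inner_α₃_α₄]
    linear_combination (-1 / 2) * τ_sq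
  · rw [real_inner_smul_right, inner_α₃_α₄]
    linear_combination (-1 / 2) * τ_sq
end
end
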